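/- Let G be a connected graph of order n ≥ 2 and π a permutation of V(G). Then γ(πG) = γ(G) if and only if G has a minimum dominating set D admitting a partition D = D₁ ∪ D₂ such that D₁ dominates V(G)∖D₂, π(D) is a minimum dominating set of G, and π(D₂) dominates V(G)∖π(D₁). -/

import Mathlib

open SimpleGraph

variable {V : Type*}

/-- `A` dominates `B`: every vertex of `B` is in the closed neighborhood of some vertex of `A`. -/
def Dominates (G : SimpleGraph V) (A B : Set V) : Prop :=
  ∀ b ∈ B, ∃ a ∈ A, a = b ∨ G.Adj a b

/-- `D` is a dominating set of `G`. -/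
def IsDomSet (G : SimpleGraph V) (D : Set V) : Prop :=
  Dominates G D Set.univ

/-- The domination number of `G`. -/
noncomputable def domNum (G : SimpleGraph V) : ℕ :=
  sInf {n | ∃ D : Set V, IsDomSet G D ∧ D.ncard = n}

/-- The prism of `G` with respect to a permutation `π`: two disjoint copies of `G`
joined by the perfect matching `u – π u`. -/
def prism (G : SimpleGraph V) (π : Equiv.Perm V) : SimpleGraph (V ⊕ V) :=
  SimpleGraph.fromRel (fun a b =>
    match a, b with
    | Sum.inl u, Sum.inl v => G.Adj u v
    | Sum.inr u, Sum.inr v => G.Adj u v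
    | Sum.inl u, Sum.inr v => v = π u
    | Sum.inr _, Sum.inl _ => False)

/-- `G` is a universal fixer. -/
def IsUniversalFixer (G : SimpleGraph V) : Prop :=
  ∀ π : Equiv.Perm V, domNum (prism G π) = domNum G

/-- `D` is a γ-set (minimum dominating set) of `G`. -/
def IsGammaSet (G : SimpleGraph V) (D : Set V) : Prop :=
  IsDomSet G D ∧ D.ncard = domNum G

/-- `D = [D₁, D₂]` is a symmetric γ-set of `G`. -/
def IsSymGammaSet (G : SimpleGraph V) (D D1 D2 : Set V) : Prop :=
  IsGammaSet G D ∧ D = D1 ∪ D2 ∧ Disjoint D1 D2 ∧ D1.Nonempty ∧ D2.Nonempty ∧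
    Dominates G D1 (Set.univ \ D2) ∧ Dominates G D2 (Set.univ \ D1)

/-- `S` is a 2-packing: closed neighborhoods of distinct vertices of `S` are disjoint. -/
def IsTwoPacking (G : SimpleGraph V) (S : Set V) : Prop :=
  ∀ x ∈ S, ∀ y ∈ S, x ≠ y →
    Disjoint (insert x (G.neighborSet x)) (insert y (G.neighborSet y))

/-- `D` is an even symmetric γ-set of `G`. -/
def IsEvenSymGammaSet (G : SimpleGraph V) (D : Set V) : Prop :=
  ∃ D1 D2, IsSymGammaSet G D D1 D2 ∧ D1.ncard = D2.ncard

/-!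
A set of vertices of the prism is `D₁` on the first copy and `π(D₂)` on the second. It dominates
the first copy iff `D₁` dominates `V ∖ D₂` (the rest is reached through the matching), and the
second copy iff `π(D₂)` dominates `V ∖ π(D₁)`. Hence `D₁ ∪ D₂` dominates `G`, which gives
`γ(G) ≤ γ(πG)`; equality forces `|D₁ ∪ D₂| = |D₁| + |D₂| = γ(G)`, i.e. a γ-set split into disjoint
parts. Conversely such a split yields a dominating set of the prism of size `γ(G)`.
-/

lemma isDomSet_univ (G : SimpleGraph V) : IsDomSet G Set.univ :=
  fun b _ => ⟨b, trivial, Or.inl rfl⟩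

lemma domNum_le_ncard {G : SimpleGraph V} {D : Set V} (h : IsDomSet G D) :
    domNum G ≤ D.ncard :=
  Nat.sInf_le ⟨D, h, rfl⟩

lemma exists_isGammaSet (G : SimpleGraph V) : ∃ D, IsGammaSet G D :=
  Nat.sInf_mem (s := {n | ∃ D : Set V, IsDomSet G D ∧ D.ncard = n})
    ⟨_, Set.univ, isDomSet_univ G, rfl⟩

lemma isDomSet_union_of_dominates_diff {G : SimpleGraph V} {A B : Set V}
    (h : Dominates G A (Set.univ \ B)) : IsDomSet G (A ∪ B) := fun v _ => by
  by_cases hv : v ∈ B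
  · exact ⟨v, Or.inr hv, Or.inl rfl⟩
  · obtain ⟨a, ha, hav⟩ := h v ⟨trivial, hv⟩
    exact ⟨a, Or.inl ha, hav⟩

namespace prism

variable {G : SimpleGraph V} {π : Equiv.Perm V} {u v : V}

@[simp]
lemma adj_inl_inl : (prism G π).Adj (Sum.inl u) (Sum.inl v) ↔ G.Adj u v := by
  simp [prism, G.adj_comm v u]; exact fun h => h.ne

@[simp]
lemma adj_inr_inr : (prism G π).Adj (Sum.inr u) (Sum.inr v) ↔ G.Adj u v := by
  simp [prism, G.adj_comm v u]; exact fun h => h.ne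

@[simp]
lemma adj_inl_inr : (prism G π).Adj (Sum.inl u) (Sum.inr v) ↔ v = π u := by
  simp [prism]

@[simp]
lemma adj_inr_inl : (prism G π).Adj (Sum.inr u) (Sum.inl v) ↔ u = π v := by
  simp [prism]

end prism

lemma isDomSet_prism_iff {G : SimpleGraph V} {π : Equiv.Perm V} {A B : Set V} :
    IsDomSet (prism G π) (Sum.inl '' A ∪ Sum.inr '' B) ↔
      Dominates G A (Set.univ \ π ⁻¹' B) ∧ Dominates G B (Set.univ \ π '' A) := by
  simp only [IsDomSet, Dominates, Set.mem_univ, forall_const, Sum.forall, Set.mem_sdiff, true_and]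
  refine and_congr (forall_congr' fun v => ?_) (forall_congr' fun v => ?_)
  · rw [← or_iff_not_imp_right]
    simp [Sum.exists]
  · rw [← or_iff_not_imp_left]
    simp [Sum.exists, eq_comm (a := v), ← Equiv.eq_symm_apply, or_comm]

lemma ncard_image_inl_union_image_inr {α β : Type*} [Finite α] [Finite β] (A : Set α)
    (B : Set β) : (Sum.inl '' A ∪ Sum.inr '' B : Set (α ⊕ β)).ncard = A.ncard + B.ncard := by
  rw [Set.ncard_union_eq Set.disjoint_image_inl_image_inr,
    Set.ncard_image_of_injective _ Sum.inl_injective,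
    Set.ncard_image_of_injective _ Sum.inr_injective]

lemma exists_isGammaSet_prism (G : SimpleGraph V) (π : Equiv.Perm V) :
    ∃ A D : Set V, IsGammaSet (prism G π) (Sum.inl '' A ∪ Sum.inr '' (π '' D)) := by
  obtain ⟨S, hS⟩ := exists_isGammaSet (prism G π)
  refine ⟨Sum.inl ⁻¹' S, π ⁻¹' (Sum.inr ⁻¹' S), ?_⟩
  rwa [π.image_preimage, Set.image_preimage_inl_union_image_preimage_inr]

section

variable [Finite V] {G : SimpleGraph V} {π : Equiv.Perm V}

lemma domNum_le_domNum_prism : domNum G ≤ domNum (prism G π) := by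
  obtain ⟨A, D, hS, hcard⟩ := exists_isGammaSet_prism G π
  have hA := (isDomSet_prism_iff.1 hS).1
  rw [π.preimage_image] at hA
  calc domNum G ≤ (A ∪ D).ncard := domNum_le_ncard (isDomSet_union_of_dominates_diff hA)
    _ ≤ A.ncard + D.ncard := Set.ncard_union_le _ _
    _ = domNum (prism G π) := by
      rw [← hcard, ncard_image_inl_union_image_inr, Set.ncard_image_of_injective _ π.injective]

lemma domNum_prism_le_of_dominates {D₁ D₂ : Set V} (h₁ : Dominates G D₁ (Set.univ \ D₂))
    (h₂ : Dominates G (π '' D₂) (Set.univ \ π '' D₁)) :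
    domNum (prism G π) ≤ D₁.ncard + D₂.ncard := by
  have hS : IsDomSet (prism G π) (Sum.inl '' D₁ ∪ Sum.inr '' (π '' D₂)) :=
    isDomSet_prism_iff.2 ⟨by rwa [π.preimage_image], h₂⟩
  calc domNum (prism G π) ≤ _ := domNum_le_ncard hS
    _ = D₁.ncard + D₂.ncard := by
      rw [ncard_image_inl_union_image_inr, Set.ncard_image_of_injective _ π.injective]

lemma exists_partition_of_domNum_prism_le (h : domNum (prism G π) ≤ domNum G) :
    ∃ D₁ D₂ : Set V, IsGammaSet G (D₁ ∪ D₂) ∧ Disjoint D₁ D₂ ∧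
      Dominates G D₁ (Set.univ \ D₂) ∧ IsGammaSet G (π '' (D₁ ∪ D₂)) ∧
      Dominates G (π '' D₂) (Set.univ \ π '' D₁) := by
  obtain ⟨D₁, D₂, hS, hcard⟩ := exists_isGammaSet_prism G π
  obtain ⟨h₁, h₂⟩ := isDomSet_prism_iff.1 hS
  rw [π.preimage_image] at h₁
  rw [ncard_image_inl_union_image_inr, Set.ncard_image_of_injective _ π.injective] at hcard
  have hdom : IsDomSet G (D₁ ∪ D₂) := isDomSet_union_of_dominates_diff h₁
  have hγ := domNum_le_ncard hdom
  have hle := Set.ncard_union_le D₁ D₂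
  refine ⟨D₁, D₂, ⟨hdom, by omega⟩, (Set.ncard_union_eq_iff).1 (by omega), h₁, ⟨?_, ?_⟩, h₂⟩
  · rw [Set.image_union, Set.union_comm]
    exact isDomSet_union_of_dominates_diff h₂
  · rw [Set.ncard_image_of_injective _ π.injective]
    omega

end

theorem stmt_3_general [Fintype V] (G : SimpleGraph V) (π : Equiv.Perm V) :
    domNum (prism G π) = domNum G ↔
      ∃ D D1 D2 : Set V, IsGammaSet G D ∧ D = D1 ∪ D2 ∧ Disjoint D1 D2 ∧
        Dominates G D1 (Set.univ \ D2) ∧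
        IsGammaSet G ((fun v => π v) '' D) ∧
        Dominates G ((fun v => π v) '' D2) (Set.univ \ ((fun v => π v) '' D1)) := by
  constructor
  · intro h
    obtain ⟨D₁, D₂, hD, hdisj, h₁, hπD, h₂⟩ := exists_partition_of_domNum_prism_le h.le
    exact ⟨D₁ ∪ D₂, D₁, D₂, hD, rfl, hdisj, h₁, hπD, h₂⟩
  · rintro ⟨D, D₁, D₂, hD, rfl, hdisj, h₁, -, h₂⟩
    refine le_antisymm ?_ domNum_le_domNum_prism
    calc domNum (prism G π) ≤ D₁.ncard + D₂.ncard := domNum_prism_le_of_dominates h₁ h₂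
      _ = domNum G := by rw [← Set.ncard_union_eq hdisj, hD.2]

theorem stmt_3 [Fintype V] (G : SimpleGraph V) (hconn : G.Connected)
    (hn : 2 ≤ Fintype.card V) (π : Equiv.Perm V) :
    domNum (prism G π) = domNum G ↔
      ∃ D D1 D2 : Set V, IsGammaSet G D ∧ D = D1 ∪ D2 ∧ Disjoint D1 D2 ∧
        Dominates G D1 (Set.univ \ D2) ∧
        IsGammaSet G ((fun v => π v) '' D) ∧
        Dominates G ((fun v => π v) '' D2) (Set.univ \ ((fun v => π v) '' D1)) :=
  stmt_3_general G π
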